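/- Fix i ∈ I and suppose G(λ) < ∞ and ∑_{x∈ℕ^I} x_i Φ(x) λ^x < ∞. Then the mean number of class-i jobs satisfies L_i = ( λ_i + ∑_{k ∈ K∖𝒦_i} μ_k ψ_k L_{i|−k} ) / ( M(K) − Λ(I) ). -/

import Mathlib

open scoped BigOperators

/-- The balance function of balanced fairness: `Φ(0) = 1` and
`Φ(x) = (∑_{i : x_i > 0} Φ(x - e_i)) / M(⋃_{i : x_i > 0} 𝒦_i)`. -/
noncomputable def Phi {I K : Type} [Fintype I] [DecidableEq I] [DecidableEq K]
    (μ : K → ℝ) (Ka : I → Finset K) (x : I → ℕ) : ℝ :=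
  if x = fun _ => 0 then 1
  else (∑ i ∈ (Finset.univ.filter (fun i => 0 < x i)).attach,
      Phi μ Ka (Function.update x i.1 (x i.1 - 1))) /
    (∑ k ∈ (Finset.univ.filter (fun i => 0 < x i)).biUnion Ka, μ k)
termination_by ∑ i, x i
decreasing_by
  have hi := i.2
  simp only [Finset.mem_filter] at hi
  apply Finset.sum_lt_sum
  · intro j _
    rcases eq_or_ne j i.1 with rfl | h
    · simp [Function.update_self]
    · rw [Function.update_of_ne h]
  · exact ⟨i.1, Finset.mem_univ i.1, by simp [Function.update_self]; omega⟩

/-- The normalization series `G(λ) = ∑_{x∈ℕ^I} Φ(x) λ^x` (as a real tsum). -/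
noncomputable def Gf {I K : Type} [Fintype I] [DecidableEq I] [DecidableEq K]
    (μ : K → ℝ) (Ka : I → Finset K) (lam : I → ℝ) : ℝ :=
  ∑' x : I → ℕ, Phi μ Ka x * ∏ i, lam i ^ x i

/-- The mean number of class-`i` jobs, `L_i = ψ ∑_{x∈ℕ^I} x_i Φ(x) λ^x`. -/
noncomputable def meanJobs {I K : Type} [Fintype I] [DecidableEq I] [DecidableEq K]
    (μ : K → ℝ) (Ka : I → Finset K) (lam : I → ℝ) (i : I) : ℝ :=
  (Gf μ Ka lam)⁻¹ * ∑' x : I → ℕ, (x i : ℝ) * Phi μ Ka x * ∏ j, lam j ^ x j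

/-- Arrival rates of the system with all traffic of classes assigned to server `k` removed. -/
def lamMinus {I K : Type} [DecidableEq K] (Ka : I → Finset K) (lam : I → ℝ) (k : K) :
    I → ℝ :=
  fun i => if k ∈ Ka i then 0 else lam i

/-!
Multiply the balance equation `M(A(x)) Φ(x) = ∑_{j : x_j > 0} Φ(x - e_j)`, where `A(x)` is the set
of servers of the active classes, by `x_i λ^x` and add `M(K ∖ A(x)) x_i Φ(x) λ^x` to both sides.
A server `k` lies outside `A(x)` exactly when `λ_{|-k}^x = λ^x` (otherwise `λ_{|-k}^x = 0`), and
when `x_i > 0` such a server is not in `𝒦_i`. Reindexing the arrival terms by `x = y + e_j` turns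
them into `λ_j (y_i + [i = j]) Φ(y) λ^y`. Summing over `x` gives
`(M(K) - Λ(I)) ∑ x_i Φ(x) λ^x = ∑_{k ∉ 𝒦_i} μ_k ∑ x_i Φ(x) λ_{|-k}^x + λ_i G(λ)`,
and dividing by `G(λ) ≥ 1` yields the recursion.
-/

open Finset

variable {I K : Type} [Fintype I] [DecidableEq I] [DecidableEq K]

def activeServers (Ka : I → Finset K) (x : I → ℕ) : Finset K :=
  (univ.filter fun j => 0 < x j).biUnion Ka

omit [DecidableEq I] in
lemma mem_activeServers {Ka : I → Finset K} {x : I → ℕ} {k : K} :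
    k ∈ activeServers Ka x ↔ ∃ j, 0 < x j ∧ k ∈ Ka j := by
  simp [activeServers]

omit [Fintype I] in
lemma update_sub_one_eq_sub_single (x : I → ℕ) (j : I) :
    Function.update x j (x j - 1) = x - Pi.single j 1 := by
  ext m
  rcases eq_or_ne m j with rfl | hm
  · simp
  · simp [hm]

section Phi

variable (μ : K → ℝ) (Ka : I → Finset K)

lemma Phi_zero : Phi μ Ka 0 = 1 := by
  rw [Phi]
  exact if_pos rfl

lemma Phi_nonneg (hμ : ∀ k, 0 ≤ μ k) (x : I → ℕ) : 0 ≤ Phi μ Ka x := by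
  induction x using Phi.induct with
  | case1 => rw [Phi, if_pos rfl]; exact zero_le_one
  | case2 x hx ih =>
    rw [Phi, if_neg hx]
    exact div_nonneg (sum_nonneg fun j _ => ih j) (sum_nonneg fun k _ => hμ k)

lemma sum_activeServers_mul_Phi (hμ : ∀ k, 0 < μ k) (hKa : ∀ i, (Ka i).Nonempty)
    {x : I → ℕ} (hx : x ≠ 0) :
    (∑ k ∈ activeServers Ka x, μ k) * Phi μ Ka x
      = ∑ j ∈ univ.filter (fun j => 0 < x j), Phi μ Ka (x - Pi.single j 1) := by
  obtain ⟨j, hj⟩ := Function.ne_iff.mp hx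
  obtain ⟨k, hk⟩ := hKa j
  have hM : 0 < ∑ k ∈ activeServers Ka x, μ k :=
    sum_pos (fun k _ => hμ k) ⟨k, mem_activeServers.mpr ⟨j, Nat.pos_of_ne_zero hj, hk⟩⟩
  rw [Phi, if_neg (show x ≠ fun _ => 0 from hx),
    sum_attach _ fun j => Phi μ Ka (Function.update x j (x j - 1))]
  simp only [update_sub_one_eq_sub_single]
  exact mul_div_cancel₀ _ hM.ne'

end Phi

lemma prod_pow_add_single {M : Type*} [CommMonoid M] (a : I → M) (y : I → ℕ) (j : I) :
    ∏ m, a m ^ (y + (Pi.single j 1 : I → ℕ)) m = a j * ∏ m, a m ^ y m := by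
  simp only [Pi.add_apply, pow_add, prod_mul_distrib, mul_comm (∏ m, a m ^ y m)]
  simp [Pi.single_apply]

omit [DecidableEq I] in
lemma prod_pow_lamMinus (Ka : I → Finset K) (lam : I → ℝ) (k : K) (x : I → ℕ) :
    ∏ j, lamMinus Ka lam k j ^ x j
      = if k ∈ activeServers Ka x then 0 else ∏ j, lam j ^ x j := by
  split_ifs with hk
  · obtain ⟨j, hj, hkj⟩ := mem_activeServers.mp hk
    exact prod_eq_zero (mem_univ j) (by simp [lamMinus, hkj, hj.ne'])
  · refine prod_congr rfl fun j _ => ?_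
    rcases (x j).eq_zero_or_pos with h | h
    · simp [h]
    · have hkj : k ∉ Ka j := fun hkj => hk (mem_activeServers.mpr ⟨j, h, hkj⟩)
      simp [lamMinus, hkj]

omit [Fintype I] [DecidableEq I] in
lemma lamMinus_nonneg (Ka : I → Finset K) {lam : I → ℝ} (hlam : ∀ i, 0 ≤ lam i) (k : K)
    (i : I) : 0 ≤ lamMinus Ka lam k i := by
  unfold lamMinus
  split_ifs
  exacts [le_rfl, hlam i]

omit [Fintype I] [DecidableEq I] in
lemma lamMinus_le (Ka : I → Finset K) {lam : I → ℝ} (hlam : ∀ i, 0 ≤ lam i) (k : K) (i : I) :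
    lamMinus Ka lam k i ≤ lam i := by
  unfold lamMinus
  split_ifs
  exacts [hlam i, le_rfl]

omit [DecidableEq I] in
lemma Summable.mul_prod_pow_of_le {c : (I → ℕ) → ℝ} (hc : ∀ x, 0 ≤ c x) {l l' : I → ℝ}
    (hl : ∀ j, 0 ≤ l j) (hll' : ∀ j, l j ≤ l' j)
    (h : Summable fun x => c x * ∏ j, l' j ^ x j) : Summable fun x => c x * ∏ j, l j ^ x j :=
  h.of_nonneg_of_le (fun x => mul_nonneg (hc x) (prod_nonneg fun j _ => pow_nonneg (hl j) _))
    fun x => mul_le_mul_of_nonneg_left (prod_le_prod (fun j _ => pow_nonneg (hl j) _)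
      fun j _ => pow_le_pow_left₀ (hl j) (hll' j) _) (hc x)

omit [DecidableEq I] in
lemma natCast_mul_mul_prod_pow_eq_zero {lam : I → ℝ} {i : I} (hi : lam i = 0) (c : ℝ)
    (x : I → ℕ) : (x i : ℝ) * c * ∏ j, lam j ^ x j = 0 := by
  rcases (x i).eq_zero_or_pos with h | h
  · simp [h]
  · rw [prod_eq_zero (mem_univ i) (by simp [hi, h.ne']), mul_zero]

section Reindex

variable {α : Type*} [AddCommMonoid α] (f : (I → ℕ) → α) (j : I)

omit [Fintype I] in
lemma ite_pos_eq_zero_of_notMem_range (x : I → ℕ)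
    (hx : x ∉ Set.range (· + (Pi.single j 1 : I → ℕ))) : (if 0 < x j then f x else 0) = 0 := by
  refine if_neg fun hj => hx ⟨x - (Pi.single j 1 : I → ℕ), ?_⟩
  ext m
  rcases eq_or_ne m j with rfl | hm
  · simp only [Pi.add_apply, Pi.sub_apply, Pi.single_eq_same]
    omega
  · simp [hm]

omit [Fintype I] in
lemma hasSum_ite_pos_iff [TopologicalSpace α] {a : α} :
    HasSum (fun x => if 0 < x j then f x else 0) a ↔
      HasSum (fun y => f (y + (Pi.single j 1 : I → ℕ))) a := by
  rw [← (add_left_injective _).hasSum_iff (ite_pos_eq_zero_of_notMem_range f j)]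
  simp [Function.comp_def]

end Reindex

section Series

variable (μ : K → ℝ) (Ka : I → Finset K)

lemma one_le_Gf (hμ : ∀ k, 0 ≤ μ k) {lam : I → ℝ} (hlam : ∀ i, 0 ≤ lam i)
    (hG : Summable fun x : I → ℕ => Phi μ Ka x * ∏ j, lam j ^ x j) : 1 ≤ Gf μ Ka lam := by
  have h := hG.le_tsum 0 fun x _ =>
    mul_nonneg (Phi_nonneg μ Ka hμ x) (prod_nonneg fun j _ => pow_nonneg (hlam j) _)
  simpa [Gf, Phi_zero] using h

lemma sum_mul_jobs_eq_departures_add_arrivals [Fintype K] (hμ : ∀ k, 0 < μ k)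
    (hKa : ∀ i, (Ka i).Nonempty) (lam : I → ℝ) (i : I) (x : I → ℕ) :
    (∑ k, μ k) * ((x i : ℝ) * Phi μ Ka x * ∏ j, lam j ^ x j)
      = ∑ k ∈ univ \ Ka i, μ k * ((x i : ℝ) * Phi μ Ka x * ∏ j, lamMinus Ka lam k j ^ x j)
        + ∑ j, if 0 < x j then (x i : ℝ) * Phi μ Ka (x - Pi.single j 1) * ∏ m, lam m ^ x m
          else 0 := by
  rcases (x i).eq_zero_or_pos with hxi | hxi
  · simp [hxi]
  have hx : x ≠ 0 := fun h => by simp [h] at hxi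
  set A := activeServers Ka x
  set w := (x i : ℝ) * Phi μ Ka x * ∏ j, lam j ^ x j
  have hKaA : Ka i ⊆ A := fun k hk => mem_activeServers.mpr ⟨i, hxi, hk⟩
  have departures : ∑ k ∈ univ \ Ka i,
      μ k * ((x i : ℝ) * Phi μ Ka x * ∏ j, lamMinus Ka lam k j ^ x j)
        = (∑ k ∈ univ \ A, μ k) * w := by
    simp only [prod_pow_lamMinus, mul_ite, mul_zero, sum_ite, sum_const_zero, zero_add, sum_mul]
    congr 1
    ext k
    simp only [mem_filter, mem_sdiff, mem_univ, true_and]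
    exact ⟨And.right, fun hk => ⟨fun hki => hk (hKaA hki), hk⟩⟩
  have arrivals : (∑ j, if 0 < x j then (x i : ℝ) * Phi μ Ka (x - Pi.single j 1) *
      ∏ m, lam m ^ x m else 0) = (∑ k ∈ A, μ k) * w := by
    rw [← sum_filter, ← sum_mul, ← mul_sum, ← sum_activeServers_mul_Phi μ Ka hμ hKa hx]
    ring
  rw [departures, arrivals, ← add_mul, sum_sdiff (subset_univ _)]

lemma arrivals_add_single (lam : I → ℝ) (i j : I) (y : I → ℕ) :
    let x := y + Pi.single j 1
    (x i : ℝ) * Phi μ Ka (x - Pi.single j 1) * ∏ m, lam m ^ x m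
      = lam j * ((y i : ℝ) * Phi μ Ka y * ∏ m, lam m ^ y m
          + if j = i then Phi μ Ka y * ∏ m, lam m ^ y m else 0) := by
  simp only
  rw [add_tsub_cancel_right, prod_pow_add_single]
  rcases eq_or_ne j i with rfl | h
  · simp
    ring
  · simp [h.symm, h]
    ring

lemma hasSum_arrivals {lam : I → ℝ} (i j : I)
    (hG : Summable fun x : I → ℕ => Phi μ Ka x * ∏ j, lam j ^ x j)
    (hLi : Summable fun x : I → ℕ => (x i : ℝ) * Phi μ Ka x * ∏ j, lam j ^ x j) :
    HasSum (fun x : I → ℕ => if 0 < x j then (x i : ℝ) * Phi μ Ka (x - Pi.single j 1) *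
        ∏ m, lam m ^ x m else 0)
      (lam j * (∑' x, (x i : ℝ) * Phi μ Ka x * ∏ m, lam m ^ x m
        + if j = i then Gf μ Ka lam else 0)) := by
  rw [hasSum_ite_pos_iff]
  simp only [arrivals_add_single]
  refine (hLi.hasSum.add ?_).mul_left (lam j)
  by_cases h : j = i
  · simpa [h, Gf] using hG.hasSum
  · simp [h]

lemma sub_mul_tsum_jobs_eq [Fintype K] (hμ : ∀ k, 0 < μ k) (hKa : ∀ i, (Ka i).Nonempty)
    {lam : I → ℝ} (hlam : ∀ i, 0 ≤ lam i) (i : I)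
    (hG : Summable fun x : I → ℕ => Phi μ Ka x * ∏ j, lam j ^ x j)
    (hLi : Summable fun x : I → ℕ => (x i : ℝ) * Phi μ Ka x * ∏ j, lam j ^ x j) :
    ((∑ k, μ k) - ∑ j, lam j) * ∑' x : I → ℕ, (x i : ℝ) * Phi μ Ka x * ∏ j, lam j ^ x j
      = ∑ k ∈ univ \ Ka i,
          μ k * ∑' x : I → ℕ, (x i : ℝ) * Phi μ Ka x * ∏ j, lamMinus Ka lam k j ^ x j
        + lam i * Gf μ Ka lam := by
  have hLik (k : K) := hLi.mul_prod_pow_of_le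
    (fun x => mul_nonneg (Nat.cast_nonneg _) (Phi_nonneg μ Ka (fun k => (hμ k).le) x))
    (lamMinus_nonneg Ka hlam k) (lamMinus_le Ka hlam k)
  have h := (hLi.hasSum.mul_left (∑ k, μ k)).unique <| by
    simp only [sum_mul_jobs_eq_departures_add_arrivals μ Ka hμ hKa]
    exact (hasSum_sum fun k _ => (hLik k).hasSum.mul_left (μ k)).add
      (hasSum_sum fun j _ => hasSum_arrivals μ Ka i j hG hLi)
  rw [sub_mul, h]
  simp only [mul_add, sum_add_distrib, sum_mul, mul_ite, mul_zero, sum_ite_eq', mem_univ, if_true]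
  ring

end Series

theorem mean_jobs_recursion_per_class_general
    {I K : Type} [Fintype I] [DecidableEq I]
    [Fintype K] [DecidableEq K]
    (μ : K → ℝ) (hμ : ∀ k, 0 < μ k)
    (Ka : I → Finset K) (hKa : ∀ i, (Ka i).Nonempty)
    (lam : I → ℝ) (hlam : ∀ i, 0 ≤ lam i) (i : I)
    (hG : Summable (fun x : I → ℕ => Phi μ Ka x * ∏ j, lam j ^ x j))
    (hLi : Summable (fun x : I → ℕ => (x i : ℝ) * Phi μ Ka x * ∏ j, lam j ^ x j)) :
    meanJobs μ Ka lam i =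
      (lam i + ∑ k ∈ Finset.univ \ Ka i,
          μ k * ((Gf μ Ka lam)⁻¹ / (Gf μ Ka (lamMinus Ka lam k))⁻¹) *
            meanJobs μ Ka (lamMinus Ka lam k) i) /
        ((∑ k, μ k) - ∑ j, lam j) := by
  have hμ0 (k : K) : 0 ≤ μ k := (hμ k).le
  have hG1 : 1 ≤ Gf μ Ka lam := one_le_Gf μ Ka hμ0 hlam hG
  have hψ (k : K) : μ k * ((Gf μ Ka lam)⁻¹ / (Gf μ Ka (lamMinus Ka lam k))⁻¹) *
      meanJobs μ Ka (lamMinus Ka lam k) i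
        = μ k * (∑' x : I → ℕ, (x i : ℝ) * Phi μ Ka x * ∏ j, lamMinus Ka lam k j ^ x j)
          / Gf μ Ka lam := by
    have : 1 ≤ Gf μ Ka (lamMinus Ka lam k) := one_le_Gf μ Ka hμ0 (lamMinus_nonneg Ka hlam k)
      (hG.mul_prod_pow_of_le (Phi_nonneg μ Ka hμ0) (lamMinus_nonneg Ka hlam k)
        (lamMinus_le Ka hlam k))
    unfold meanJobs
    field_simp
  have key := sub_mul_tsum_jobs_eq μ Ka hμ hKa hlam i hG hLi
  rw [sum_congr rfl fun k _ => hψ k, ← sum_div]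
  unfold meanJobs
  rcases eq_or_ne ((∑ k, μ k) - ∑ j, lam j) 0 with hD | hD
  · -- junk value `_ / 0 = 0`: the balance forces `λ_i = 0`, hence `L_i = 0` as well
    have hC : 0 ≤ ∑ k ∈ univ \ Ka i,
        μ k * ∑' x : I → ℕ, (x i : ℝ) * Phi μ Ka x * ∏ j, lamMinus Ka lam k j ^ x j :=
      sum_nonneg fun k _ => mul_nonneg (hμ0 k) (tsum_nonneg fun x =>
        mul_nonneg (mul_nonneg (Nat.cast_nonneg _) (Phi_nonneg μ Ka hμ0 x))
          (prod_nonneg fun j _ => pow_nonneg (lamMinus_nonneg Ka hlam k j) _))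
    rw [hD, zero_mul] at key
    have hi : lam i = 0 := by nlinarith [hlam i]
    simp [natCast_mul_mul_prod_pow_eq_zero hi, hD]
  · rw [eq_div_iff hD]
    field_simp
    linear_combination key

/-- **Theorem 2 of the paper, per class.** If `G(λ) < ∞` and
`∑_x x_i Φ(x) λ^x < ∞`, the mean number of class-`i` jobs satisfies
`L_i = (λ_i + ∑_{k ∉ 𝒦_i} μ_k ψ_k L_{i|−k}) / (M(K) − Λ(I))`, where
`ψ_k = ψ / ψ_{|−k}`. -/
theorem mean_jobs_recursion_per_class
    {I K : Type} [Fintype I] [DecidableEq I] [Nonempty I]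
    [Fintype K] [DecidableEq K] [Nonempty K]
    (μ : K → ℝ) (hμ : ∀ k, 0 < μ k)
    (Ka : I → Finset K) (hKa : ∀ i, (Ka i).Nonempty) (hcov : ∀ k, ∃ i, k ∈ Ka i)
    (lam : I → ℝ) (hlam : ∀ i, 0 ≤ lam i) (i : I)
    (hG : Summable (fun x : I → ℕ => Phi μ Ka x * ∏ j, lam j ^ x j))
    (hLi : Summable (fun x : I → ℕ => (x i : ℝ) * Phi μ Ka x * ∏ j, lam j ^ x j)) :
    meanJobs μ Ka lam i =
      (lam i + ∑ k ∈ Finset.univ \ Ka i,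
          μ k * ((Gf μ Ka lam)⁻¹ / (Gf μ Ka (lamMinus Ka lam k))⁻¹) *
            meanJobs μ Ka (lamMinus Ka lam k) i) /
        ((∑ k, μ k) - ∑ j, lam j) :=
  mean_jobs_recursion_per_class_general μ hμ Ka hKa lam hlam i hG hLi
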